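/- The wreath product of two binary schemes is binary. That is, if (Ω,S) and (Ω',S') are binary schemes on finite sets Ω and Ω', then the scheme on Ω×Ω' whose classes are the relations {((α,γ),(β,γ)) : (α,β) ∈ s, γ ∈ Ω'} for s ∈ S, together with the relations {((α,γ),(β,δ)) : α,β ∈ Ω, (γ,δ) ∈ s'} for each non-diagonal s' ∈ S', is binary. -/
import Mathlib


/-- A scheme on a set `Ω`: a partition `S` of `Ω × Ω` containing the diagonal,
closed under taking converse relations, and such that intersection numbers
are well defined. -/
def IsScheme {Ω : Type*} (S : Set (Set (Ω × Ω))) : Prop :=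
  Setoid.IsPartition S ∧
  {p : Ω × Ω | p.1 = p.2} ∈ S ∧
  (∀ s ∈ S, {p : Ω × Ω | (p.2, p.1) ∈ s} ∈ S) ∧
  (∀ r ∈ S, ∀ s ∈ S, ∀ t ∈ S, ∀ p ∈ t, ∀ q ∈ t,
    {γ : Ω | (p.1, γ) ∈ r ∧ (γ, p.2) ∈ s}.ncard =
    {γ : Ω | (q.1, γ) ∈ r ∧ (γ, q.2) ∈ s}.ncard)

/-- An automorphism of a scheme: a permutation preserving every basis relation. -/
def IsSchemeAut {Ω : Type*} (S : Set (Set (Ω × Ω))) (f : Equiv.Perm Ω) : Prop :=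
  ∀ s ∈ S, (fun p : Ω × Ω => (f p.1, f p.2)) '' s = s

/-- A scheme is binary if every pair of tuples with the same array of basis
relations is related by an automorphism. -/
def IsBinary {Ω : Type*} (S : Set (Set (Ω × Ω))) : Prop :=
  ∀ m : ℕ, 0 < m → ∀ x y : Fin m → Ω,
    (∀ i j : Fin m, ∀ s ∈ S, ((x i, x j) ∈ s ↔ (y i, y j) ∈ s)) →
    ∃ f : Equiv.Perm Ω, IsSchemeAut S f ∧ ∀ i, f (x i) = y i

/-- The wreath product of two schemes: the classes are the relations
`{((α,γ),(β,γ)) : (α,β) ∈ s, γ ∈ Ω'}` for `s ∈ S`, together with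
`{((α,γ),(β,δ)) : α,β ∈ Ω, (γ,δ) ∈ s'}` for each non-diagonal `s' ∈ S'`. -/
def wreathScheme {Ω Ω' : Type*} (S : Set (Set (Ω × Ω))) (S' : Set (Set (Ω' × Ω'))) :
    Set (Set ((Ω × Ω') × (Ω × Ω'))) :=
  {t | (∃ s ∈ S, t = {p : (Ω × Ω') × (Ω × Ω') | (p.1.1, p.2.1) ∈ s ∧ p.1.2 = p.2.2}) ∨
       (∃ s' ∈ S', s' ≠ {q : Ω' × Ω' | q.1 = q.2} ∧
          t = {p : (Ω × Ω') × (Ω × Ω') | (p.1.2, p.2.2) ∈ s'})}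

/-- Membership in a basis relation is preserved (iff-style) by an automorphism. -/
lemma aut_mem_iff {Ω : Type*} {S : Set (Set (Ω × Ω))} {f : Equiv.Perm Ω}
    (hf : IsSchemeAut S f) {s : Set (Ω × Ω)} (hs : s ∈ S) (α β : Ω) :
    (α, β) ∈ s ↔ (f α, f β) ∈ s := by
  constructor
  · intro h
    rw [← hf s hs]
    exact ⟨(α, β), h, rfl⟩
  · intro h
    rw [← hf s hs] at h
    obtain ⟨⟨p1, p2⟩, hp, he⟩ := h
    simp only [Prod.mk.injEq] at he
    obtain ⟨h1, h2⟩ := he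
    rwa [f.injective h1, f.injective h2] at hp

/-- Converse: iff-style preservation implies being an automorphism. -/
lemma aut_of_mem_iff {Ω : Type*} {S : Set (Set (Ω × Ω))} {f : Equiv.Perm Ω}
    (h : ∀ s ∈ S, ∀ α β : Ω, ((α, β) ∈ s ↔ (f α, f β) ∈ s)) :
    IsSchemeAut S f := by
  intro s hs
  ext q
  constructor
  · rintro ⟨p, hp, rfl⟩
    exact (h s hs p.1 p.2).1 hp
  · intro hq
    refine ⟨(f.symm q.1, f.symm q.2), ?_, by simp⟩
    exact (h s hs _ _).2 (by simpa using hq)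

lemma refl_aut {Ω : Type*} (S : Set (Set (Ω × Ω))) : IsSchemeAut S (Equiv.refl Ω) :=
  aut_of_mem_iff (fun _ _ _ _ => Iff.rfl)

/-- The wreath permutation `(α, γ) ↦ (g γ α, h γ)`. -/
def wreathPerm {Ω Ω' : Type*} (g : Ω' → Equiv.Perm Ω) (h : Equiv.Perm Ω') :
    Equiv.Perm (Ω × Ω') where
  toFun p := (g p.2 p.1, h p.2)
  invFun q := ((g (h.symm q.2)).symm q.1, h.symm q.2)
  left_inv p := by simp
  right_inv q := by simp

lemma wreathPerm_aut {Ω Ω' : Type*} {S : Set (Set (Ω × Ω))} {S' : Set (Set (Ω' × Ω'))}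
    {g : Ω' → Equiv.Perm Ω} {h : Equiv.Perm Ω'}
    (hg : ∀ γ, IsSchemeAut S (g γ)) (hh : IsSchemeAut S' h) :
    IsSchemeAut (wreathScheme S S') (wreathPerm g h) := by
  apply aut_of_mem_iff
  rintro t ht P Q
  rcases ht with ⟨s, hs, rfl⟩ | ⟨s', hs', -, rfl⟩
  · simp only [Set.mem_setOf_eq, wreathPerm, Equiv.coe_fn_mk]
    constructor
    · rintro ⟨h1, h2⟩
      refine ⟨?_, by rw [h2]⟩
      rw [← h2]
      exact (aut_mem_iff (hg P.2) hs P.1 Q.1).1 h1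
    · rintro ⟨h1, h2⟩
      have h2' : P.2 = Q.2 := h.injective h2
      refine ⟨?_, h2'⟩
      rw [← h2'] at h1
      exact (aut_mem_iff (hg P.2) hs P.1 Q.1).2 h1
  · simp only [Set.mem_setOf_eq, wreathPerm, Equiv.coe_fn_mk]
    exact aut_mem_iff hh hs' P.2 Q.2

/-- the wreath product of two binary schemes is binary. -/
theorem wreath_of_binary_is_binary {Ω Ω' : Type*} [Fintype Ω] [Fintype Ω']
    (S : Set (Set (Ω × Ω))) (S' : Set (Set (Ω' × Ω')))
    (hS : IsScheme S) (hS' : IsScheme S')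
    (hb : IsBinary S) (hb' : IsBinary S') :
    IsBinary (wreathScheme S S') := by
  classical
  intro m hm x y hxy
  -- A0 : equality of second coordinates is transferred
  have hA0 : ∀ i j, (x i).2 = (x j).2 ↔ (y i).2 = (y j).2 := by
    intro i j
    constructor
    · intro hc
      obtain ⟨s, ⟨hsS, hsmem⟩, -⟩ := hS.1.2 ((x i).1, (x j).1)
      have ht : {p : (Ω × Ω') × (Ω × Ω') | (p.1.1, p.2.1) ∈ s ∧ p.1.2 = p.2.2}
          ∈ wreathScheme S S' := Or.inl ⟨s, hsS, rfl⟩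
      have := (hxy i j _ ht).1 ⟨hsmem, hc⟩
      exact this.2
    · intro hc
      obtain ⟨s, ⟨hsS, hsmem⟩, -⟩ := hS.1.2 ((y i).1, (y j).1)
      have ht : {p : (Ω × Ω') × (Ω × Ω') | (p.1.1, p.2.1) ∈ s ∧ p.1.2 = p.2.2}
          ∈ wreathScheme S S' := Or.inl ⟨s, hsS, rfl⟩
      have := (hxy i j _ ht).2 ⟨hsmem, hc⟩
      exact this.2
  -- A1 : all S'-relations are transferred
  have hA1 : ∀ i j, ∀ s' ∈ S', (((x i).2, (x j).2) ∈ s' ↔ ((y i).2, (y j).2) ∈ s') := by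
    intro i j s' hs'
    by_cases hd : s' = {q : Ω' × Ω' | q.1 = q.2}
    · subst hd
      simpa using hA0 i j
    · have := hxy i j _ (Or.inr ⟨s', hs', hd, rfl⟩)
      simpa using this
  obtain ⟨h, hhaut, hh⟩ := hb' m hm (fun i => (x i).2) (fun i => (y i).2) hA1
  -- B1 : within a fiber, S-relations are transferred
  have hB1 : ∀ i j, (x i).2 = (x j).2 →
      ∀ s ∈ S, (((x i).1, (x j).1) ∈ s ↔ ((y i).1, (y j).1) ∈ s) := by
    intro i j hc s hs
    have hd : (y i).2 = (y j).2 := (hA0 i j).1 hc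
    have := hxy i j _ (Or.inl ⟨s, hs, rfl⟩)
    simp only [Set.mem_setOf_eq] at this
    constructor
    · intro hmem
      exact (this.1 ⟨hmem, hc⟩).1
    · intro hmem
      exact (this.2 ⟨hmem, hd⟩).1
  -- fiberwise automorphisms
  have hfib : ∀ γ : Ω', ∃ g : Equiv.Perm Ω, IsSchemeAut S g ∧
      ∀ i, (x i).2 = γ → g ((x i).1) = (y i).1 := by
    intro γ
    by_cases hne : ∃ i0, (x i0).2 = γ
    · obtain ⟨i0, hi0⟩ := hne
      obtain ⟨g, hgaut, hg⟩ := hb m hm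
        (fun i => if (x i).2 = γ then (x i).1 else (x i0).1)
        (fun i => if (x i).2 = γ then (y i).1 else (y i0).1)
        (by
          intro i j s hs
          by_cases hi : (x i).2 = γ <;> by_cases hj : (x j).2 = γ <;>
            simp only [hi, hj, if_pos, if_neg, not_false_iff, ite_true, ite_false]
          · exact hB1 i j (hi.trans hj.symm) s hs
          · exact hB1 i i0 (hi.trans hi0.symm) s hs
          · exact hB1 i0 j (hi0.trans hj.symm) s hs
          · exact hB1 i0 i0 rfl s hs)
      refine ⟨g, hgaut, fun i hi => ?_⟩
      have := hg i
      simpa [hi] using this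
    · exact ⟨Equiv.refl Ω, refl_aut S, fun i hi => absurd ⟨i, hi⟩ hne⟩
  choose g hgaut hg using hfib
  refine ⟨wreathPerm g h, wreathPerm_aut hgaut hhaut, fun i => ?_⟩
  show (g ((x i).2) ((x i).1), h ((x i).2)) = y i
  rw [hg _ i rfl, hh i]
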